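/- arXiv:2308.10474 — 5 statements merged into one kernel-verified Lean document; each statement's English description precedes it below -/
import Mathlib

section
/- Let Λ = ℤ_p[[T]] and let X = Λ/(f) where f = a_n T^n + a_{n+1} T^{n+1} + ⋯ ∈ Λ with a_n ≠ 0. Then for any r ≥ n, the submodule (T^r X)[T] (elements of T^r X killed by T) is trivial. -/
/-!
Write `f = Tⁿ u` with `u(0) ≠ 0`, so `T ∤ u`. If `Tʳ g` is killed by `T` in `Λ/(f)`, then
`Tⁿ u ∣ T^(r+1) g`; cancelling `Tⁿ` leaves `u ∣ T · T^(r-n) g`, and since the prime `T` does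
not divide `u` it can be dropped, giving `u ∣ T^(r-n) g`, i.e. `f ∣ Tʳ g`.
-/

section CancelMonoid

variable {M : Type*} [CommMonoidWithZero M] [IsCancelMulZero M] {π u : M}

theorem Prime.dvd_of_dvd_mul_left_of_not_dvd (hπ : Prime π) (hu : ¬π ∣ u) {a : M}
    (h : u ∣ π * a) : u ∣ a := by
  obtain ⟨c, hc⟩ := h
  obtain ⟨c', rfl⟩ := (hπ.dvd_or_dvd ⟨a, hc.symm⟩).resolve_left hu
  refine ⟨c', mul_left_cancel₀ hπ.ne_zero ?_⟩
  rw [hc, mul_left_comm]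

theorem Prime.pow_mul_dvd_pow_mul_of_dvd_pow_succ_mul (hπ : Prime π) (hu : ¬π ∣ u)
    {n r : ℕ} (hr : n ≤ r) {g : M} (h : π ^ n * u ∣ π ^ (r + 1) * g) :
    π ^ n * u ∣ π ^ r * g := by
  obtain ⟨k, rfl⟩ := Nat.exists_eq_add_of_le hr
  rw [show π ^ (n + k + 1) * g = π ^ n * (π * (π ^ k * g)) by rw [pow_succ, pow_add]; ac_rfl,
    mul_dvd_mul_iff_left (pow_ne_zero n hπ.ne_zero)] at h
  rw [pow_add, mul_assoc]
  exact mul_dvd_mul_left _ (hπ.dvd_of_dvd_mul_left_of_not_dvd hu h)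

end CancelMonoid

theorem Ideal.Quotient.smul_mk_eq_zero_iff_dvd {R : Type*} [CommRing R] (f a g : R) :
    a • Ideal.Quotient.mk (Ideal.span {f}) g = 0 ↔ f ∣ a * g := by
  rw [Algebra.smul_def, Ideal.Quotient.algebraMap_eq, ← map_mul, Ideal.Quotient.eq_zero_iff_dvd]

theorem Prime.eq_zero_of_pow_smul_of_smul_eq_zero {R : Type*} [CommRing R] [IsDomain R]
    {π u : R} (hπ : Prime π) (hu : ¬π ∣ u) {n r : ℕ} (hr : n ≤ r)
    {m : R ⧸ Ideal.span {π ^ n * u}} (hm : ∃ y, π ^ r • y = m) (hkill : π • m = 0) :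
    m = 0 := by
  obtain ⟨y, rfl⟩ := hm
  obtain ⟨g, rfl⟩ := Ideal.Quotient.mk_surjective y
  rw [smul_smul, ← pow_succ', Ideal.Quotient.smul_mk_eq_zero_iff_dvd] at hkill
  rw [Ideal.Quotient.smul_mk_eq_zero_iff_dvd]
  exact hπ.pow_mul_dvd_pow_mul_of_dvd_pow_succ_mul hu hr hkill

theorem PowerSeries.exists_eq_X_pow_mul_not_X_dvd {R : Type*} [CommSemiring R] {f : PowerSeries R}
    {n : ℕ} (han : PowerSeries.coeff n f ≠ 0) (hlow : ∀ k < n, PowerSeries.coeff k f = 0) :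
    ∃ u, f = PowerSeries.X ^ n * u ∧ ¬PowerSeries.X ∣ u := by
  obtain ⟨u, rfl⟩ := PowerSeries.X_pow_dvd_iff.mpr hlow
  refine ⟨u, rfl, fun hXu => han ?_⟩
  rw [PowerSeries.coeff_X_pow_mul', if_pos le_rfl, Nat.sub_self,
    PowerSeries.coeff_zero_eq_constantCoeff_apply, ← PowerSeries.X_dvd_iff]
  exact hXu

/-- Let `Λ = ℤ_p[[T]]` and `X = Λ/(f)` where `f = aₙTⁿ + aₙ₊₁Tⁿ⁺¹ + ⋯` with `aₙ ≠ 0`.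
Then for any `r ≥ n`, the `T`-torsion of `TʳX` is trivial: any element of `X` that is
a multiple of `Tʳ` and is killed by `T` is zero. -/
theorem trX_torsion_trivial (p : ℕ) [Fact p.Prime] (f : PowerSeries ℤ_[p]) (n : ℕ)
    (han : PowerSeries.coeff (R := ℤ_[p]) n f ≠ 0)
    (hlow : ∀ k < n, PowerSeries.coeff (R := ℤ_[p]) k f = 0)
    (r : ℕ) (hr : n ≤ r)
    (m : PowerSeries ℤ_[p] ⧸ Ideal.span {f})
    (hm : ∃ y : PowerSeries ℤ_[p] ⧸ Ideal.span {f},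
      ((PowerSeries.X : PowerSeries ℤ_[p]) ^ r) • y = m)
    (hkill : (PowerSeries.X : PowerSeries ℤ_[p]) • m = 0) :
    m = 0 := by
  obtain ⟨u, rfl, hu⟩ := PowerSeries.exists_eq_X_pow_mul_not_X_dvd han hlow
  exact PowerSeries.X_prime.eq_zero_of_pow_smul_of_smul_eq_zero hu hr hm hkill
end

section
/- Let Λ = ℤ_p[[T]] and let X = Λ/(f) where f = a_n T^n + a_{n+1} T^{n+1} + ⋯ ∈ Λ with a_n ≠ 0. Then for any r ≥ n, the quotient T^r X / T^{r+1} X is isomorphic as a ℤ_p-module to ℤ_p/(a_n). -/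
/-!
Write `f = Tⁿ g`, so that `g(0) = aₙ`. Modulo `Tʳ⁺¹X` every element `Tʳh` of `TʳX` equals
`h(0) Tʳ`, so `a ↦ a Tʳ` maps `ℤ_p` onto `TʳX / Tʳ⁺¹X`. Its kernel consists of the `a` with
`a Tʳ = q Tʳ⁺¹ + Tⁿ g w`; cancelling `Tⁿ` shows `Tʳ⁻ⁿ ∣ g w`, hence `Tʳ⁻ⁿ ∣ w` because `T` is
prime and does not divide `g`, and comparing constant terms after cancelling `Tʳ⁻ⁿ` gives
`g(0) ∣ a`.
-/

open PowerSeries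

set_option synthInstance.maxHeartbeats 1000000

/-- The submodule `TʳX ⊆ X = ℤ_p[[T]]/(f)`, i.e. the image of multiplication by `Tʳ`
(here `T` is the power series variable `X`), viewed as a `ℤ_p`-submodule. -/
noncomputable def TrX (p : ℕ) [Fact p.Prime] (f : PowerSeries ℤ_[p]) (r : ℕ) :
    Submodule ℤ_[p] (PowerSeries ℤ_[p] ⧸ Ideal.span {f}) :=
  LinearMap.range (LinearMap.mulLeft ℤ_[p]
    (Ideal.Quotient.mk (Ideal.span {f}) ((PowerSeries.X : PowerSeries ℤ_[p]) ^ r)))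

namespace PowerSeries

variable {R : Type*} [CommRing R]

theorem X_pow_succ_dvd_X_pow_mul_C_constantCoeff_sub (h : R⟦X⟧) (r : ℕ) :
    X ^ (r + 1) ∣ X ^ r * (C (constantCoeff h) - h) := by
  rw [pow_succ]
  exact mul_dvd_mul_left _ (X_dvd_iff.mpr (by simp))

variable [IsDomain R]

theorem constantCoeff_dvd_of_C_mul_X_pow_eq {g w q : R⟦X⟧} {a : R} {k : ℕ}
    (hg : constantCoeff g ≠ 0) (h : C a * X ^ k = q * X ^ (k + 1) + g * w) :
    constantCoeff g ∣ a := by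
  have hgw : g * w = X ^ k * (C a - q * X) := by rw [mul_sub, mul_comm (X ^ k), h]; ring
  obtain ⟨w', rfl⟩ : X ^ k ∣ w :=
    X_prime.pow_dvd_of_dvd_mul_left k (mt X_dvd_iff.mp hg) ⟨_, hgw⟩
  have : g * w' = C a - q * X :=
    mul_left_cancel₀ (pow_ne_zero k X_ne_zero) (by rw [← hgw]; ring)
  exact ⟨constantCoeff w', by simpa using congrArg constantCoeff this.symm⟩

theorem C_mul_X_pow_mem_span_X_pow_succ_sup_iff {f : R⟦X⟧} {n r : ℕ}
    (hn : coeff n f ≠ 0) (hlow : ∀ k < n, coeff k f = 0) (hr : n ≤ r) (a : R) :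
    C a * X ^ r ∈ Ideal.span {X ^ (r + 1)} ⊔ Ideal.span {f} ↔ coeff n f ∣ a := by
  obtain ⟨g, rfl⟩ : X ^ n ∣ f := X_pow_dvd_iff.mpr hlow
  obtain ⟨k, rfl⟩ := Nat.exists_eq_add_of_le hr
  rw [coeff_X_pow_mul', if_pos le_rfl, Nat.sub_self, coeff_zero_eq_constantCoeff] at hn ⊢
  simp only [Ideal.mem_span_singleton_sup, Ideal.mem_span_singleton']
  constructor
  · rintro ⟨q, _, ⟨w, rfl⟩, h⟩
    refine constantCoeff_dvd_of_C_mul_X_pow_eq (k := k) (q := q) (w := w) hn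
      (mul_left_cancel₀ (pow_ne_zero n X_ne_zero) ?_)
    linear_combination -h
  · rintro ⟨c, rfl⟩
    obtain ⟨g', hg'⟩ := X_dvd_iff.mpr (show constantCoeff (g - C (constantCoeff g)) = 0 by simp)
    refine ⟨-(C c * g'), C c * X ^ k * (X ^ n * g), ⟨C c * X ^ k, by ring⟩, ?_⟩
    rw [map_mul]
    linear_combination (C c * X ^ (n + k)) * hg'

end PowerSeries

namespace TrX

variable (p : ℕ) [Fact p.Prime] (f : ℤ_[p]⟦X⟧) (r : ℕ)

theorem mk_mem_iff (x : ℤ_[p]⟦X⟧) :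
    Ideal.Quotient.mk (Ideal.span {f}) x ∈ TrX p f r ↔ x ∈ Ideal.span {X ^ r} ⊔ Ideal.span {f} := by
  simp only [TrX, LinearMap.mem_range, LinearMap.mulLeft_apply, Ideal.mem_span_singleton_sup,
    Ideal.Quotient.mk_surjective.exists, ← map_mul, Ideal.Quotient.eq]
  constructor
  · rintro ⟨h, hh⟩
    exact ⟨h, _, Ideal.mul_mem_left _ (-1) hh, by ring⟩
  · rintro ⟨h, b, hb, rfl⟩
    exact ⟨h, by simpa [mul_comm] using neg_mem hb⟩

theorem X_pow_mem : Ideal.Quotient.mk (Ideal.span {f}) (X ^ r) ∈ TrX p f r :=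
  (mk_mem_iff p f r _).mpr (Ideal.mem_sup_left (Ideal.mem_span_singleton_self _))

noncomputable def ofScalar :
    ℤ_[p] →ₗ[ℤ_[p]] TrX p f r ⧸ (TrX p f (r + 1)).comap (TrX p f r).subtype :=
  Submodule.mkQ _ ∘ₗ LinearMap.toSpanSingleton ℤ_[p] _ ⟨_, X_pow_mem p f r⟩

theorem ofScalar_eq_mk_iff (a : ℤ_[p]) (x : ℤ_[p]⟦X⟧)
    (hx : Ideal.Quotient.mk (Ideal.span {f}) x ∈ TrX p f r) :
    ofScalar p f r a = Submodule.Quotient.mk ⟨_, hx⟩ ↔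
      C a * X ^ r - x ∈ Ideal.span {X ^ (r + 1)} ⊔ Ideal.span {f} := by
  rw [ofScalar, LinearMap.comp_apply, Submodule.mkQ_apply, Submodule.Quotient.eq,
    Submodule.mem_comap, ← mk_mem_iff]
  simp only [LinearMap.toSpanSingleton_apply, Submodule.subtype_apply, Submodule.coe_smul,
    map_sub, C_eq_algebraMap, ← Algebra.smul_def]
  rfl

theorem ofScalar_surjective : Function.Surjective (ofScalar p f r) := by
  intro z
  obtain ⟨⟨y, hy⟩, rfl⟩ := Submodule.Quotient.mk_surjective _ z
  obtain ⟨x, rfl⟩ := Ideal.Quotient.mk_surjective y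
  obtain ⟨b, c, hc, rfl⟩ := Ideal.mem_span_singleton_sup.mp ((mk_mem_iff p f r x).mp hy)
  refine ⟨constantCoeff b, (ofScalar_eq_mk_iff p f r _ _ hy).mpr ?_⟩
  have hb := Ideal.mem_span_singleton.mpr (X_pow_succ_dvd_X_pow_mul_C_constantCoeff_sub b r)
  convert sub_mem (Ideal.mem_sup_left hb) (Ideal.mem_sup_right hc) using 1
  ring

theorem ker_ofScalar {n : ℕ} (hn : coeff n f ≠ 0) (hlow : ∀ k < n, coeff k f = 0) (hr : n ≤ r) :
    LinearMap.ker (ofScalar p f r) = Ideal.span {coeff n f} := by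
  ext a
  have h0 : (0 : TrX p f r ⧸ (TrX p f (r + 1)).comap (TrX p f r).subtype) =
      Submodule.Quotient.mk ⟨_, (mk_mem_iff p f r 0).mpr (zero_mem _)⟩ := by
    rw [← Submodule.Quotient.mk_zero]; congr
  rw [LinearMap.mem_ker, h0, ofScalar_eq_mk_iff, sub_zero, Ideal.mem_span_singleton,
    C_mul_X_pow_mem_span_X_pow_succ_sup_iff hn hlow hr]

end TrX

/-- Let `Λ = ℤ_p[[T]]` and `X = Λ/(f)` where `f = aₙTⁿ + aₙ₊₁Tⁿ⁺¹ + ⋯` with `aₙ ≠ 0`.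
Then for any `r ≥ n`, the quotient `TʳX / Tʳ⁺¹X` is isomorphic as a `ℤ_p`-module to
`ℤ_p/(aₙ)`. -/
theorem trX_quot_iso (p : ℕ) [Fact p.Prime] (f : PowerSeries ℤ_[p]) (n : ℕ)
    (han : PowerSeries.coeff n f ≠ 0)
    (hlow : ∀ k < n, PowerSeries.coeff k f = 0)
    (r : ℕ) (hr : n ≤ r) :
    Nonempty ((↥(TrX p f r) ⧸
        Submodule.comap (TrX p f r).subtype (TrX p f (r + 1)))
      ≃ₗ[ℤ_[p]] (ℤ_[p] ⧸ Ideal.span {PowerSeries.coeff n f})) :=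
  ⟨((TrX.ofScalar p f r).quotKerEquivOfSurjective (TrX.ofScalar_surjective p f r)).symm.trans
    (Submodule.quotEquivOfEq _ _ (TrX.ker_ofScalar p f r han hlow hr))⟩
end

section
/- Let Λ = ℤ_p[[T]] and let X = Λ/(f) with f ∈ Λ, f ≠ 0, and n = ord_T(f) (the order of vanishing of f at T = 0). Then for any r ≥ n, the quotient T^r X / T^{r+1} X is finite, with cardinality equal to the cardinality of ℤ_p/(a_n) where a_n is the coefficient of T^n in f. -/
/-!
Multiplication by `Tʳ` followed by the quotient map sends `c ∈ ℤ_p` to `[Tʳc] ∈ TʳX/Tʳ⁺¹X`.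
It is onto because every power series is its constant term plus `T` times another one.
Its kernel is `(aₙ)`: write `f = Tⁿg` with `g(0) = aₙ ≠ 0`. A relation
`Tʳc = Tʳ⁺¹u + vf` gives `Tⁿ⁺ᵏ(c - Tu) = Tⁿvg` with `k = r - n`, and since `T ∤ g` the prime
`T` forces `Tᵏ ∣ v`; cancelling and comparing constant terms yields `c ∈ aₙℤ_p`.
Nonzero ideals of `ℤ_p` are `(pᵏ)`, with finite quotient `ℤ/pᵏ`.
-/

open PowerSeries

set_option synthInstance.maxHeartbeats 1000000

instance PadicInt.hasFiniteQuotients (p : ℕ) [Fact p.Prime] : Ring.HasFiniteQuotients ℤ_[p] where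
  finiteQuotient {I} hI := by
    obtain ⟨k, rfl⟩ := PadicInt.ideal_eq_span_pow_p hI
    rw [← PadicInt.ker_toZModPow]
    exact Finite.of_equiv _
      (RingHom.quotientKerEquivOfSurjective (ZMod.ringHom_surjective _)).toEquiv.symm

theorem Ideal.Quotient.mk_mem_span_singleton_mk_iff {S : Type*} [CommRing S] {a b f : S} :
    Ideal.Quotient.mk (Ideal.span {f}) a ∈ Ideal.span {Ideal.Quotient.mk (Ideal.span {f}) b} ↔
      a ∈ Ideal.span {b, f} := by
  rw [← Set.image_singleton, ← Ideal.map_span, Ideal.mem_quotient_iff_mem_sup,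
    Ideal.span_insert]

section MulRangeQuot

variable {R A : Type*} [CommRing R] [CommRing A] [Algebra R A] (s t : A)

noncomputable def mulRangeQuotMap :
    R →ₗ[R] LinearMap.range (LinearMap.mulLeft R s) ⧸
      (LinearMap.range (LinearMap.mulLeft R (s * t))).comap
        (LinearMap.range (LinearMap.mulLeft R s)).subtype :=
  Submodule.mkQ _ ∘ₗ (LinearMap.mulLeft R s).rangeRestrict ∘ₗ Algebra.linearMap R A

variable {s t}

theorem mulRangeQuotMap_surjective
    (h : ∀ a : A, ∃ c : R, ∃ b : A, a = algebraMap R A c + t * b) :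
    Function.Surjective (mulRangeQuotMap (R := R) s t) := by
  intro q
  obtain ⟨⟨_, a, rfl⟩, rfl⟩ := Submodule.Quotient.mk_surjective _ q
  obtain ⟨c, b, rfl⟩ := h a
  refine ⟨c, (Submodule.Quotient.eq _).mpr ⟨-b, ?_⟩⟩
  change s * t * -b = s * algebraMap R A c - s * (algebraMap R A c + t * b)
  ring

theorem mem_ker_mulRangeQuotMap {c : R} :
    c ∈ LinearMap.ker (mulRangeQuotMap s t) ↔ s * algebraMap R A c ∈ Ideal.span {s * t} := by
  simp [mulRangeQuotMap, Ideal.mem_span_singleton', mul_comm _ (s * t), mul_assoc]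

end MulRangeQuot

namespace PowerSeries

variable {R : Type*} [CommRing R]

theorem exists_C_add_X_mul (φ : R⟦X⟧) : ∃ c : R, ∃ ψ : R⟦X⟧, φ = C c + X * ψ :=
  ⟨constantCoeff φ, _, (eq_X_mul_shift_add_const φ).trans (add_comm _ _)⟩

theorem X_pow_mul_C_mem_span_iff [IsDomain R] {f : R⟦X⟧} {n r : ℕ} (hf : f.order = n)
    (hr : n ≤ r) {c : R} :
    X ^ r * C c ∈ Ideal.span {X ^ (r + 1), f} ↔ c ∈ Ideal.span {coeff n f} := by
  obtain ⟨k, rfl⟩ := Nat.exists_eq_add_of_le hr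
  obtain ⟨g, hfg, hg⟩ : ∃ g, f = X ^ n * g ∧ constantCoeff g = coeff n f := by
    refine ⟨divXPowOrder f, ?_, by simp [constantCoeff_divXPowOrder, hf]⟩
    conv_lhs => rw [← X_pow_order_mul_divXPowOrder (f := f), hf, ENat.toNat_natCast]
  rw [Ideal.mem_span_pair, Ideal.mem_span_singleton']
  constructor
  · rintro ⟨u, v, huv⟩
    have hvg : v * g = X ^ k * (C c - X * u) := by
      apply mul_left_cancel₀ (pow_ne_zero n X_ne_zero)
      linear_combination huv - v * hfg
    have hg0 : ¬X ∣ g := by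
      rw [X_dvd_iff, hg]
      exact (order_eq_nat.mp hf).1
    obtain ⟨w, rfl⟩ := X_prime.pow_dvd_of_dvd_mul_right k hg0 ⟨_, hvg⟩
    have hwg : w * g = C c - X * u :=
      mul_left_cancel₀ (pow_ne_zero k X_ne_zero) (by linear_combination hvg)
    refine ⟨constantCoeff w, ?_⟩
    simpa [hg] using congrArg constantCoeff hwg
  · rintro ⟨d, rfl⟩
    have hsplit := eq_X_mul_shift_add_const g
    refine ⟨-(C d * mk fun i => coeff (i + 1) g), C d * X ^ k, ?_⟩
    rw [map_mul, ← hg]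
    linear_combination (C d * X ^ k) * hfg + (C d * X ^ (n + k)) * hsplit

end PowerSeries

theorem trX_succ (p : ℕ) [Fact p.Prime] (f : ℤ_[p]⟦X⟧) (r : ℕ) :
    TrX p f (r + 1) = LinearMap.range (LinearMap.mulLeft ℤ_[p]
      (Ideal.Quotient.mk (Ideal.span {f}) (X ^ r) * Ideal.Quotient.mk (Ideal.span {f}) X)) := by
  rw [TrX, pow_succ, map_mul]

theorem trX_quot_finite_card_general (p : ℕ) [Fact p.Prime] (f : PowerSeries ℤ_[p])
    (n : ℕ) (hn : f.order = n) (r : ℕ) (hr : n ≤ r) :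
    Finite (↥(TrX p f r) ⧸ Submodule.comap (TrX p f r).subtype (TrX p f (r + 1))) ∧
    Nat.card (↥(TrX p f r) ⧸ Submodule.comap (TrX p f r).subtype (TrX p f (r + 1))) =
      Nat.card (ℤ_[p] ⧸ Ideal.span {PowerSeries.coeff n f}) := by
  set π := Ideal.Quotient.mk (Ideal.span {f})
  set Φ := mulRangeQuotMap (R := ℤ_[p]) (π (X ^ r)) (π X)
  have halg (c : ℤ_[p]) : algebraMap ℤ_[p] _ c = π (C c) := by
    rw [← Ideal.Quotient.mk_algebraMap, PowerSeries.algebraMap_apply, Algebra.algebraMap_self,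
      RingHom.id_apply]
  have hsurj : Function.Surjective Φ := by
    refine mulRangeQuotMap_surjective fun a => ?_
    obtain ⟨φ, rfl⟩ := Ideal.Quotient.mk_surjective a
    obtain ⟨c, ψ, rfl⟩ := exists_C_add_X_mul φ
    exact ⟨c, π ψ, by rw [halg, map_add, map_mul]⟩
  have hker : LinearMap.ker Φ = Ideal.span {coeff n f} := by
    ext c
    rw [mem_ker_mulRangeQuotMap, halg, ← map_mul, ← map_mul, ← pow_succ,
      Ideal.Quotient.mk_mem_span_singleton_mk_iff, ← X_pow_mul_C_mem_span_iff hn hr]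
  have : Finite (ℤ_[p] ⧸ Ideal.span {coeff n f}) :=
    Ring.HasFiniteQuotients.finiteQuotient (by simpa using (order_eq_nat.mp hn).1)
  have e := (Submodule.quotEquivOfEq _ _ hker.symm).trans
    (LinearMap.quotKerEquivOfSurjective _ hsurj)
  rw [trX_succ]
  exact ⟨Finite.of_equiv _ e.toEquiv, (Nat.card_congr e.toEquiv).symm⟩

/-- Let `Λ = ℤ_p[[T]]`, `X = Λ/(f)` with `f ≠ 0` and `n = ord_T(f)` (formalized as
`f.order = n`, i.e. the largest `n` with `f ∈ (Tⁿ)`).  Then for any `r ≥ n`, the quotient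
`TʳX / Tʳ⁺¹X` is finite, with cardinality equal to the cardinality of `ℤ_p/(aₙ)` where
`aₙ` is the coefficient of `Tⁿ` in `f`. -/
theorem trX_quot_finite_card (p : ℕ) [Fact p.Prime] (f : PowerSeries ℤ_[p]) (hf : f ≠ 0)
    (n : ℕ) (hn : f.order = n) (r : ℕ) (hr : n ≤ r) :
    Finite (↥(TrX p f r) ⧸ Submodule.comap (TrX p f r).subtype (TrX p f (r + 1))) ∧
    Nat.card (↥(TrX p f r) ⧸ Submodule.comap (TrX p f r).subtype (TrX p f (r + 1))) =
      Nat.card (ℤ_[p] ⧸ Ideal.span {PowerSeries.coeff n f}) :=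
  trX_quot_finite_card_general p f n hn r hr
end

section
/- Let 0 → A →^h B → C → 0 be an exact sequence of finitely generated ℤ_p-modules. Then #(A_tor) · #(C_tor) equals det*(h) · #(B_tor) up to a p-adic unit, where det*(h) is the product of the nonzero elementary divisors (entries in the Smith normal form) of the induced map A/A_tor → B/B_tor. -/
/-!
The torsion of `B` is an extension of `S := π(B_tor)` by `h(A_tor) = B_tor ∩ h(A)`, and,
since `S` is torsion, the torsion of `C` is an extension of `(C/S)_tor` by `S`. The cokernel of
`A/A_tor → B/B_tor` is `B/(h(A) + B_tor) ≅ C/S`, so multiplying the two orders gives the claim.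
-/

/-- A module homomorphism maps torsion elements to torsion elements. -/
theorem torsion_le_comap_torsion {R M N : Type*} [CommRing R]
    [AddCommGroup M] [AddCommGroup N] [Module R M] [Module R N] (h : M →ₗ[R] N) :
    Submodule.torsion R M ≤ (Submodule.torsion R N).comap h := by
  rintro x ⟨a, ha⟩
  refine Submodule.mem_comap.mpr ⟨a, ?_⟩
  rw [Submonoid.smul_def] at ha ⊢
  rw [← map_smul, ha, map_zero]

/-- The induced map `A/A_tor → B/B_tor` of a `ℤ_p`-linear map `h : A → B`. -/
noncomputable def inducedTorsionFree (p : ℕ) [Fact p.Prime] {A B : Type*}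
    [AddCommGroup A] [AddCommGroup B] [Module ℤ_[p] A] [Module ℤ_[p] B]
    (h : A →ₗ[ℤ_[p]] B) :
    (A ⧸ Submodule.torsion ℤ_[p] A) →ₗ[ℤ_[p]] (B ⧸ Submodule.torsion ℤ_[p] B) :=
  Submodule.mapQ _ _ h (torsion_le_comap_torsion h)

namespace Submodule

variable {R M N : Type*} [CommRing R] [AddCommGroup M] [AddCommGroup N]
  [Module R M] [Module R N]

theorem card_eq_card_inf_ker_mul_card_map (f : M →ₗ[R] N) (p : Submodule R M) :
    Nat.card p = Nat.card ↥(p ⊓ LinearMap.ker f) * Nat.card ↥(p.map f) := by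
  have hker : Nat.card (LinearMap.ker (f.domRestrict p)) = Nat.card ↥(p ⊓ LinearMap.ker f) := by
    rw [LinearMap.ker_domRestrict, ← map_comap_subtype]
    exact Nat.card_congr (equivMapOfInjective _ p.injective_subtype _).toEquiv
  have lagrange : Nat.card p = Nat.card (p ⧸ LinearMap.ker (f.domRestrict p)) *
      Nat.card (LinearMap.ker (f.domRestrict p)) :=
    AddSubgroup.card_eq_card_quotient_mul_card_addSubgroup _
  rw [lagrange, Nat.card_congr (f.domRestrict p).quotKerEquivRange.toEquiv,
    LinearMap.range_domRestrict, hker, mul_comm]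

theorem comap_torsion_of_injective {f : M →ₗ[R] N} (hf : Function.Injective f) :
    (torsion R N).comap f = torsion R M := by
  refine le_antisymm (fun x ⟨a, ha⟩ => ⟨a, hf ?_⟩) (torsion_le_comap_torsion f)
  rw [Submonoid.smul_def] at ha ⊢
  rw [map_smul, ha, map_zero]

theorem card_torsion_inf_range_of_injective {f : M →ₗ[R] N} (hf : Function.Injective f) :
    Nat.card ↥(torsion R N ⊓ LinearMap.range f) = Nat.card (torsion R M) := by
  rw [inf_comm, ← map_comap_eq, comap_torsion_of_injective hf]
  exact (Nat.card_congr (equivMapOfInjective f hf _).toEquiv).symm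

theorem card_torsion_congr (e : M ≃ₗ[R] N) :
    Nat.card (torsion R M) = Nat.card (torsion R N) := by
  rw [Nat.card_congr (e.submoduleMap (torsion R M)).toEquiv, map_equiv_eq_comap_symm,
    comap_torsion_of_injective e.symm.injective]

theorem torsion_quotient_eq_map_of_le_torsion {S : Submodule R M} (hS : S ≤ torsion R M) :
    torsion R (M ⧸ S) = (torsion R M).map S.mkQ := by
  refine le_antisymm (fun y ⟨a, ha⟩ => ?_) (map_le_iff_le_comap.mpr (torsion_le_comap_torsion _))
  obtain ⟨x, rfl⟩ := S.mkQ_surjective y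
  have hax : (a : R) • x ∈ S := by
    rw [← Quotient.mk_eq_zero]
    simpa [Submonoid.smul_def] using ha
  obtain ⟨b, hb⟩ := hS hax
  refine mem_map.mpr ⟨x, ⟨b * a, ?_⟩, rfl⟩
  rw [Submonoid.smul_def] at hb ⊢
  rwa [Submonoid.coe_mul, mul_smul]

theorem card_torsion_eq_card_mul_card_torsion_quotient {S : Submodule R M}
    (hS : S ≤ torsion R M) :
    Nat.card (torsion R M) = Nat.card S * Nat.card (torsion R (M ⧸ S)) := by
  rw [card_eq_card_inf_ker_mul_card_map S.mkQ, ker_mkQ, inf_eq_right.mpr hS,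
    torsion_quotient_eq_map_of_le_torsion hS]

noncomputable def quotientMapKerEquivQuotientMap {π : M →ₗ[R] N} (hπ : Function.Surjective π)
    (P : Submodule R M) :
    ((M ⧸ P) ⧸ (LinearMap.ker π).map P.mkQ) ≃ₗ[R] N ⧸ P.map π :=
  let φ := (P.map π).mkQ ∘ₗ π
  have hker : P ⊔ LinearMap.ker π = LinearMap.ker φ := by
    rw [LinearMap.ker_comp, ker_mkQ, comap_map_eq]
  (quotientQuotientEquivQuotientSup P _).trans <| (quotEquivOfEq _ _ hker).trans <|
    φ.quotKerEquivOfSurjective ((P.map π).mkQ_surjective.comp hπ)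

end Submodule

open Submodule

theorem range_inducedTorsionFree (p : ℕ) [Fact p.Prime] {A B : Type*}
    [AddCommGroup A] [AddCommGroup B] [Module ℤ_[p] A] [Module ℤ_[p] B]
    (h : A →ₗ[ℤ_[p]] B) :
    LinearMap.range (inducedTorsionFree p h) = (LinearMap.range h).map (torsion ℤ_[p] B).mkQ := by
  rw [inducedTorsionFree, mapQ, range_liftQ, LinearMap.range_comp]

theorem card_torsion_exact_seq_general (p : ℕ) [Fact p.Prime] {A B C : Type*}
    [AddCommGroup A] [AddCommGroup B] [AddCommGroup C]
    [Module ℤ_[p] A] [Module ℤ_[p] B] [Module ℤ_[p] C]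
    (h : A →ₗ[ℤ_[p]] B) (π : B →ₗ[ℤ_[p]] C)
    (hinj : Function.Injective h) (hsurj : Function.Surjective π)
    (hex : LinearMap.range h = LinearMap.ker π) :
    Nat.card ↥(Submodule.torsion ℤ_[p] A) * Nat.card ↥(Submodule.torsion ℤ_[p] C) =
      Nat.card ↥(Submodule.torsion ℤ_[p]
          ((B ⧸ Submodule.torsion ℤ_[p] B) ⧸ LinearMap.range (inducedTorsionFree p h))) *
        Nat.card ↥(Submodule.torsion ℤ_[p] B) := by
  set S := (torsion ℤ_[p] B).map π
  have hS : S ≤ torsion ℤ_[p] C := map_le_iff_le_comap.mpr (torsion_le_comap_torsion π)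
  have hB : Nat.card (torsion ℤ_[p] B) = Nat.card (torsion ℤ_[p] A) * Nat.card S := by
    rw [card_eq_card_inf_ker_mul_card_map π, ← hex, card_torsion_inf_range_of_injective hinj]
  have hcoker := card_torsion_congr
    (quotientMapKerEquivQuotientMap hsurj (torsion ℤ_[p] B))
  rw [range_inducedTorsionFree, hex, hcoker, hB,
    card_torsion_eq_card_mul_card_torsion_quotient hS]
  ring

/-- Let `0 → A →ʰ B → C → 0` be an exact sequence of finitely generated `ℤ_p`-modules.
Then `#(A_tor) · #(C_tor) = det*(h) · #(B_tor)` up to a `p`-adic unit.  Here `det*(h)`,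
the product of the nonzero elementary divisors (Smith normal form entries) of the induced
map `A/A_tor → B/B_tor`, has `p`-adic valuation equal to the length of the torsion part of
the cokernel of that induced map; equality up to a `p`-adic unit is therefore formalized as
the equality of the corresponding (finite) cardinalities, all of which are powers of `p`. -/
theorem card_torsion_exact_seq (p : ℕ) [Fact p.Prime] {A B C : Type*}
    [AddCommGroup A] [AddCommGroup B] [AddCommGroup C]
    [Module ℤ_[p] A] [Module ℤ_[p] B] [Module ℤ_[p] C]
    [Module.Finite ℤ_[p] A] [Module.Finite ℤ_[p] B] [Module.Finite ℤ_[p] C]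
    (h : A →ₗ[ℤ_[p]] B) (π : B →ₗ[ℤ_[p]] C)
    (hinj : Function.Injective h) (hsurj : Function.Surjective π)
    (hex : LinearMap.range h = LinearMap.ker π) :
    Nat.card ↥(Submodule.torsion ℤ_[p] A) * Nat.card ↥(Submodule.torsion ℤ_[p] C) =
      Nat.card ↥(Submodule.torsion ℤ_[p]
          ((B ⧸ Submodule.torsion ℤ_[p] B) ⧸ LinearMap.range (inducedTorsionFree p h))) *
        Nat.card ↥(Submodule.torsion ℤ_[p] B) :=
  card_torsion_exact_seq_general p h π hinj hsurj hex
end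

section
/- Let B be a cofinitely generated ℤ_p-module with finite residual quotient, and let γ act on B as an endomorphism such that the kernel of (γ − 1) on B is finite. Then the maximal divisible submodule B_div is contained in (γ−1)B, and consequently #(B/(γ−1)B) ≤ [B : B_div]. -/
/-- The maximal `p`-divisible submodule of a `ℤ_p`-module contained in a submodule `N`. -/
noncomputable def maxDivIn (p : ℕ) [Fact p.Prime] {M : Type*} [AddCommGroup M] [Module ℤ_[p] M]
    (N : Submodule ℤ_[p] M) : Submodule ℤ_[p] M :=
  sSup {S | S ≤ N ∧ ∀ x ∈ S, ∃ y ∈ S, (p : ℤ_[p]) • y = x}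

/-!
Write `D = B_div`. Its image `φ D` is again divisible, so `φ D ≤ D` and `φ` restricts to an
endomorphism of `D` with finite kernel. For a divisible module `#D[pⁿ] = #D[p]ⁿ`, and the same
holds for the divisible image `φ D`; counting `D[pⁿ] → (φ D)[pⁿ]` gives
`#D[p]ⁿ ≤ #ker φ · #(φ D)[p]ⁿ` for every `n`, so `#D[p] ≤ #(φ D)[p]` and hence `D[p] ≤ φ D`.
Divisibility of `φ D` then lifts this to `D[pⁿ] ≤ φ D` for all `n`, i.e. `φ D = D` as `D` is
`p`-power torsion.
-/

open Submodule LinearMap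

theorem Nat.le_of_forall_pow_le_mul_pow {q q' c : ℕ} (h : ∀ n, q ^ n ≤ c * q' ^ n) : q ≤ q' := by
  by_contra! hlt
  have hq : (0 : ℝ) < q := by exact_mod_cast (Nat.zero_le _).trans_lt hlt
  obtain ⟨n, hn⟩ := exists_pow_lt_of_lt_one (inv_pos.mpr (by positivity : (0 : ℝ) < c + 1))
    ((div_lt_one hq).mpr (by exact_mod_cast hlt : (q' : ℝ) < q))
  rw [div_pow, div_lt_iff₀ (by positivity), inv_mul_eq_div, lt_div_iff₀ (by positivity)] at hn
  have : (q : ℝ) ^ n ≤ c * q' ^ n := by exact_mod_cast h n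
  nlinarith [pow_pos hq n]

theorem LinearMap.card_eq_card_ker_mul_card_range {R M N : Type*} [Ring R] [AddCommGroup M]
    [Module R M] [AddCommGroup N] [Module R N] (f : M →ₗ[R] N) :
    Nat.card M = Nat.card (ker f) * Nat.card (range f) := by
  rw [(ker f).card_eq_card_quotient_mul_card, Nat.card_congr f.quotKerEquivRange.toEquiv]

section KerRestrict

variable {R M N : Type*} [Ring R] [AddCommGroup M] [Module R M] [AddCommGroup N] [Module R N]
  (f : M →ₗ[R] N) {p : Submodule R M} {q : Submodule R N} (hf : ∀ x ∈ p, f x ∈ q)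

def LinearMap.kerRestrictInclusion : ker (f.restrict hf) →ₗ[R] ker f :=
  p.subtype.restrict fun x hx => by
    rw [mem_ker] at hx ⊢
    exact congrArg Subtype.val hx

theorem LinearMap.kerRestrictInclusion_injective :
    Function.Injective (f.kerRestrictInclusion hf) := by
  simp [kerRestrictInclusion]

instance LinearMap.finite_ker_restrict [Finite (ker f)] : Finite (ker (f.restrict hf)) :=
  Finite.of_injective _ (f.kerRestrictInclusion_injective hf)

end KerRestrict

section Torsion

variable {R M N : Type*} [CommRing R] [AddCommGroup M] [Module R M] [AddCommGroup N] [Module R N]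
  (a : R)

theorem Submodule.smul_mem_torsionBy_pow {n : ℕ} {x : M} (hx : x ∈ torsionBy R M (a ^ (n + 1))) :
    a • x ∈ torsionBy R M (a ^ n) := by
  rwa [mem_torsionBy_iff, smul_smul, ← pow_succ]

theorem Submodule.map_mem_torsionBy (f : M →ₗ[R] N) {x : M} (hx : x ∈ torsionBy R M a) :
    f x ∈ torsionBy R N a := by
  rw [mem_torsionBy_iff] at hx ⊢
  rw [← map_smul, hx, map_zero]

def Submodule.torsionByPowSuccSmul (n : ℕ) :
    torsionBy R M (a ^ (n + 1)) →ₗ[R] torsionBy R M (a ^ n) :=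
  (DistribSMul.toLinearMap R M a).restrict fun _ => smul_mem_torsionBy_pow a

def LinearMap.torsionByRestrict (f : M →ₗ[R] N) : torsionBy R M a →ₗ[R] torsionBy R N a :=
  f.restrict fun _ => map_mem_torsionBy a f

theorem LinearMap.torsionByRestrict_injective {f : M →ₗ[R] N} (hf : Function.Injective f) :
    Function.Injective (f.torsionByRestrict a) := by
  rw [torsionByRestrict, injective_restrict_iff, ker_eq_bot.mpr hf]
  exact disjoint_bot_right

theorem Submodule.card_torsionBy_pow_succ (n : ℕ) :
    Nat.card (torsionBy R M (a ^ (n + 1))) =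
      Nat.card (torsionBy R M a) * Nat.card (range (torsionByPowSuccSmul (M := M) a n)) := by
  have hker : ker (torsionByPowSuccSmul a n) =
      (torsionBy R M a).comap (torsionBy R M (a ^ (n + 1))).subtype := by
    ext x
    rw [mem_ker, mem_comap, mem_torsionBy_iff, ← Subtype.coe_inj]
    rfl
  rw [card_eq_card_ker_mul_card_range (torsionByPowSuccSmul a n), hker]
  congr 1
  exact Nat.card_congr (comapSubtypeEquivOfLe
    (torsionBy_le_torsionBy_of_dvd _ _ (dvd_pow_self a n.succ_ne_zero))).toEquiv

instance Submodule.finite_torsionBy_pow [Finite (torsionBy R M a)] (n : ℕ) :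
    Finite (torsionBy R M (a ^ n)) := by
  induction n with
  | zero => rw [pow_zero, torsionBy_one]; infer_instance
  | succ n ih =>
    refine Nat.finite_of_card_ne_zero ?_
    rw [card_torsionBy_pow_succ]
    exact mul_ne_zero Nat.card_pos.ne' Nat.card_pos.ne'

theorem Submodule.card_torsionBy_pow_of_surjective_smul
    (hdiv : Function.Surjective fun x : M => a • x) (n : ℕ) :
    Nat.card (torsionBy R M (a ^ n)) = Nat.card (torsionBy R M a) ^ n := by
  induction n with
  | zero => rw [pow_zero, torsionBy_one, pow_zero, Nat.card_unique]
  | succ n ih =>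
    have hsurj : Function.Surjective (torsionByPowSuccSmul (M := M) a n) := by
      rintro ⟨x, hx⟩
      obtain ⟨y, rfl⟩ := hdiv x
      exact ⟨⟨y, by rwa [mem_torsionBy_iff, pow_succ, mul_smul]⟩, rfl⟩
    rw [card_torsionBy_pow_succ, range_eq_top.mpr hsurj, Nat.card_congr topEquiv.toEquiv, ih,
      pow_succ, mul_comm]

theorem LinearMap.card_torsionBy_le_card_ker_mul (f : M →ₗ[R] N) [Finite (ker f)]
    [Finite (torsionBy R N a)] :
    Nat.card (torsionBy R M a) ≤ Nat.card (ker f) * Nat.card (torsionBy R N a) := by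
  rw [card_eq_card_ker_mul_card_range (f.torsionByRestrict a)]
  gcongr
  · exact Nat.card_le_card_of_injective _ (f.kerRestrictInclusion_injective _)
  · exact Nat.card_le_card_of_injective _ Subtype.val_injective

theorem LinearMap.surjective_smul_of_surjective {f : M →ₗ[R] N} (hf : Function.Surjective f)
    (hdiv : Function.Surjective fun x : M => a • x) :
    Function.Surjective fun y : N => a • y := by
  intro y
  obtain ⟨x, rfl⟩ := hf y
  obtain ⟨z, rfl⟩ := hdiv x
  exact ⟨f z, (map_smul f a z).symm⟩

theorem LinearMap.surjective_of_torsionBy_le_range (f : N →ₗ[R] M)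
    (hdiv : Function.Surjective fun x : N => a • x) (htors : ∀ x : M, ∃ n : ℕ, a ^ n • x = 0)
    (h : torsionBy R M a ≤ range f) : Function.Surjective f := by
  suffices hpow : ∀ n : ℕ, torsionBy R M (a ^ n) ≤ range f by
    intro x
    obtain ⟨n, hn⟩ := htors x
    exact hpow n hn
  intro n
  induction n with
  | zero => simp [torsionBy_one]
  | succ n ih =>
    intro x hx
    obtain ⟨y, hy⟩ := ih (smul_mem_torsionBy_pow a hx)
    obtain ⟨z, rfl⟩ := hdiv y
    have hxz : x - f z ∈ torsionBy R M a := by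
      rw [mem_torsionBy_iff, smul_sub, ← map_smul, hy, sub_self]
    simpa using add_mem (h hxz) (mem_range_self f z)

theorem LinearMap.surjective_of_finite_ker {a : R} (hdiv : Function.Surjective fun x : M => a • x)
    (htors : ∀ x : M, ∃ n : ℕ, a ^ n • x = 0) [Finite (torsionBy R M a)]
    (f : M →ₗ[R] M) [Finite (ker f)] : Function.Surjective f := by
  refine f.surjective_of_torsionBy_le_range a hdiv htors ?_
  have hdivN := surjective_smul_of_surjective a f.surjective_rangeRestrict hdiv
  have hinj := (range f).subtype.torsionByRestrict_injective a (range f).subtype_injective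
  have : Finite (torsionBy R (range f) a) := Finite.of_injective _ hinj
  have : Finite (ker f.rangeRestrict) := f.ker_rangeRestrict ▸ inferInstance
  have hcard : Nat.card (torsionBy R M a) ≤ Nat.card (torsionBy R (range f) a) :=
    Nat.le_of_forall_pow_le_mul_pow (c := Nat.card (ker f)) fun n => by
      have := f.rangeRestrict.card_torsionBy_le_card_ker_mul (a ^ n)
      rwa [ker_rangeRestrict, card_torsionBy_pow_of_surjective_smul a hdiv,
        card_torsionBy_pow_of_surjective_smul a hdivN] at this
  intro x hx
  obtain ⟨⟨⟨_, z, rfl⟩, _⟩, hy⟩ := (hinj.bijective_of_nat_card_le hcard).2 ⟨x, hx⟩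
  exact ⟨z, congrArg Subtype.val hy⟩

end Torsion

section maxDivIn

variable {p : ℕ} [Fact p.Prime] {M : Type*} [AddCommGroup M] [Module ℤ_[p] M]

theorem le_maxDivIn {N S : Submodule ℤ_[p] M} (hSN : S ≤ N)
    (hS : Function.Surjective fun x : S => (p : ℤ_[p]) • x) : S ≤ maxDivIn p N :=
  le_sSup ⟨hSN, fun x hx => by
    obtain ⟨y, hy⟩ := hS ⟨x, hx⟩
    exact ⟨y, y.2, congrArg Subtype.val hy⟩⟩

theorem surjective_smul_maxDivIn (N : Submodule ℤ_[p] M) :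
    Function.Surjective fun x : maxDivIn p N => (p : ℤ_[p]) • x := by
  rintro ⟨x, hx⟩
  suffices ∃ y ∈ maxDivIn p N, (p : ℤ_[p]) • y = x from
    this.elim fun y ⟨hy, hyx⟩ => ⟨⟨y, hy⟩, Subtype.ext hyx⟩
  rw [maxDivIn, sSup_eq_iSup'] at hx
  refine iSup_induction _ (motive := fun z => ∃ y ∈ maxDivIn p N, (p : ℤ_[p]) • y = z) hx
    ?_ ⟨0, zero_mem _, smul_zero _⟩ ?_
  · rintro ⟨S, hS⟩ z hz
    obtain ⟨y, hy, hyz⟩ := hS.2 z hz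
    exact ⟨y, le_sSup hS hy, hyz⟩
  · rintro _ _ ⟨y₁, hy₁, rfl⟩ ⟨y₂, hy₂, rfl⟩
    exact ⟨y₁ + y₂, add_mem hy₁ hy₂, smul_add _ _ _⟩

end maxDivIn

/-- Let `B` be a cofinitely generated `ℤ_p`-module (`p`-power torsion with finite
`p`-torsion) with finite residual quotient `B/B_div`, and let `φ = γ − 1` be an
endomorphism of `B` with finite kernel.  Then the maximal divisible submodule `B_div` is
contained in `(γ−1)B`, and consequently `#(B/(γ−1)B) ≤ [B : B_div]`. -/
theorem divisible_le_range_of_finite_ker (p : ℕ) [Fact p.Prime] {B : Type*}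
    [AddCommGroup B] [Module ℤ_[p] B]
    (htors : ∀ x : B, ∃ k : ℕ, (p : ℤ_[p]) ^ k • x = 0)
    (hptors : Finite ↥(LinearMap.ker (LinearMap.lsmul ℤ_[p] B (p : ℤ_[p]))))
    (hres : Finite (B ⧸ maxDivIn p (⊤ : Submodule ℤ_[p] B)))
    (φ : B →ₗ[ℤ_[p]] B) (hker : Finite ↥(LinearMap.ker φ)) :
    maxDivIn p (⊤ : Submodule ℤ_[p] B) ≤ LinearMap.range φ ∧
    Nat.card (B ⧸ LinearMap.range φ) ≤
      Nat.card (B ⧸ maxDivIn p (⊤ : Submodule ℤ_[p] B)) := by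
  set D := maxDivIn p (⊤ : Submodule ℤ_[p] B)
  have hdiv : Function.Surjective fun x : D => (p : ℤ_[p]) • x := surjective_smul_maxDivIn ⊤
  have hφD : ∀ x ∈ D, φ x ∈ D := fun x hx => le_maxDivIn le_top
    (surjective_smul_of_surjective _ (φ.submoduleMap_surjective D) hdiv) (mem_map_of_mem hx)
  have : Finite (torsionBy ℤ_[p] B p) := hptors
  have : Finite (torsionBy ℤ_[p] D p) :=
    Finite.of_injective _ (D.subtype.torsionByRestrict_injective _ D.subtype_injective)
  have hsurj := (φ.restrict hφD).surjective_of_finite_ker hdiv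
    fun x => (htors x).imp fun _ hk => Subtype.ext hk
  have hle : D ≤ range φ := fun x hx =>
    let ⟨y, hy⟩ := hsurj ⟨x, hx⟩
    ⟨y, congrArg Subtype.val hy⟩
  exact ⟨hle, Nat.card_le_card_of_surjective _ (factor_surjective hle)⟩
end
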